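/- arXiv:q-alg/9507006 — 2 statements merged into one kernel-verified Lean document; each statement's English description precedes it below -/
import Mathlib

section
/- Under hypotheses (H1)–(H3), the family of linear maps F_X : Z(X) → Z'(X) (characterized by F_X(v_Z(M)) = v_{Z'}(M) for all M : 𝟙 ⟶ X) is natural in X: for every morphism M : X ⟶ Y in C one has F_Y ∘ Z(M) = Z'(M) ∘ F_X as linear maps Z(X) → Z'(Y). -/
open CategoryTheory MonoidalCategory

universe v u

/-!
Pick any `N : 𝟙 ⟶ X` and `P : X ⟶ 𝟙`. Then `v_Z(N) ≠ 0`, because `Z(P)` sends it to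
`⟨Z(N ≫ P)⟩ · ε_Z(1) ≠ 0`, so `v_Z(N)` spans the line `Z(X)`. On `v_Z(N)` both sides of the naturality
square equal `v_{Z'}(N ≫ M)` by functoriality, and two linear maps on a line that agree on a nonzero
vector are equal.
-/

/-- The distinguished vector `ε_Z(1) ∈ Z(𝟙)` determined by the unit isomorphism
`ε_Z : k ≅ Z(𝟙)` of a (strong) monoidal functor `Z : C ⥤ ModuleCat k`. -/
noncomputable def unitVec {k : Type*} [Field k] {C : Type u} [Category.{v} C]
    [MonoidalCategory C] (Z : C ⥤ ModuleCat k) [Z.Monoidal] : Z.obj (𝟙_ C) :=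
  Functor.LaxMonoidal.ε Z (1 : k)

/-- `v_Z(M) := Z(M)(ε_Z(1)) ∈ Z(X)` for a morphism `M : 𝟙 ⟶ X`. -/
noncomputable def vec {k : Type*} [Field k] {C : Type u} [Category.{v} C]
    [MonoidalCategory C] (Z : C ⥤ ModuleCat k) [Z.Monoidal] {X : C} (M : 𝟙_ C ⟶ X) :
    Z.obj X :=
  Z.map M (unitVec Z)

theorem LinearMap.eq_of_finrank_eq_one {K V W : Type*} [Field K] [AddCommGroup V] [Module K V]
    [AddCommGroup W] [Module K W] (hV : Module.finrank K V = 1) {v : V} (hv : v ≠ 0)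
    {f g : V →ₗ[K] W} (h : f v = g v) : f = g :=
  LinearMap.ext_on ((finrank_eq_one_iff_of_nonzero v hv).mp hV) (by simpa using h)

section StateVectors

variable {k : Type*} [Field k] {C : Type u} [Category.{v} C] [MonoidalCategory C]
  (Z : C ⥤ ModuleCat k) [Z.Monoidal]

theorem unitVec_ne_zero : unitVec Z ≠ 0 := by
  have hε : Function.Injective (Functor.LaxMonoidal.ε Z) :=
    (ModuleCat.mono_iff_injective _).mp inferInstance
  intro h
  exact one_ne_zero (hε (by simpa [unitVec] using h))

theorem vec_comp {X Y : C} (N : 𝟙_ C ⟶ X) (M : X ⟶ Y) : vec Z (N ≫ M) = Z.map M (vec Z N) := by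
  simp [vec]

theorem vec_ne_zero_of_vec_comp_ne_zero {X Y : C} {N : 𝟙_ C ⟶ X} {M : X ⟶ Y}
    (h : vec Z (N ≫ M) ≠ 0) : vec Z N ≠ 0 := by
  intro hN
  rw [vec_comp, hN, map_zero] at h
  exact h rfl

theorem vec_ne_zero_of_map_unitVec_eq_smul {X : C} {N : 𝟙_ C ⟶ X} {P : X ⟶ 𝟙_ C} {c : k}
    (hc : c ≠ 0) (hNP : Z.map (N ≫ P) (unitVec Z) = c • unitVec Z) : vec Z N ≠ 0 :=
  vec_ne_zero_of_vec_comp_ne_zero Z (M := P) <| by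
    rw [vec, hNP]
    exact smul_ne_zero hc (unitVec_ne_zero Z)

end StateVectors

theorem map_apply_eq_of_vec_ne_zero {k : Type*} [Field k] {C : Type u} [Category.{v} C]
    [MonoidalCategory C] {Z Z' : C ⥤ ModuleCat k} [Z.Monoidal] [Z'.Monoidal]
    (F : ∀ X : C, Z.obj X →ₗ[k] Z'.obj X)
    (hF : ∀ (X : C) (M : 𝟙_ C ⟶ X), F X (vec Z M) = vec Z' M)
    {X Y : C} (hX : Module.finrank k (Z.obj X) = 1) {N : 𝟙_ C ⟶ X} (hN : vec Z N ≠ 0)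
    (M : X ⟶ Y) (u : Z.obj X) : F Y (Z.map M u) = Z'.map M (F X u) := by
  suffices (F Y).comp (Z.map M).hom = (Z'.map M).hom.comp (F X) from LinearMap.congr_fun this u
  refine LinearMap.eq_of_finrank_eq_one hX hN ?_
  calc F Y (Z.map M (vec Z N)) = vec Z' (N ≫ M) := by rw [← vec_comp, hF]
    _ = Z'.map M (F X (vec Z N)) := by rw [hF, vec_comp]

/-- Under (H1)–(H3), any family of linear maps `F_X : Z(X) → Z'(X)` with
`F_X (v_Z(M)) = v_{Z'}(M)` for all `M : 𝟙 ⟶ X` is natural in `X`: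
`F_Y ∘ Z(M) = Z'(M) ∘ F_X` for every morphism `M : X ⟶ Y`. -/
theorem components_natural {k : Type*} [Field k] {C : Type u} [Category.{v} C]
    [MonoidalCategory C] (Z Z' : C ⥤ ModuleCat k) [Z.Monoidal] [Z'.Monoidal]
    -- (H1): every object admits a morphism from and a morphism to the unit object
    (H1 : ∀ X : C, Nonempty (𝟙_ C ⟶ X) ∧ Nonempty (X ⟶ 𝟙_ C))
    -- (H2): for every `f : 𝟙 ⟶ 𝟙` the scalars `⟨Z(f)⟩` and `⟨Z'(f)⟩` agree and are nonzero
    (H2 : ∀ f : 𝟙_ C ⟶ 𝟙_ C, ∃ c : k, c ≠ 0 ∧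
      Z.map f (unitVec Z) = c • unitVec Z ∧ Z'.map f (unitVec Z') = c • unitVec Z')
    -- (H3): all state spaces are one-dimensional
    (H3 : ∀ X : C, Module.finrank k (Z.obj X) = 1 ∧ Module.finrank k (Z'.obj X) = 1)
    (F : ∀ X : C, Z.obj X →ₗ[k] Z'.obj X)
    (hF : ∀ (X : C) (M : 𝟙_ C ⟶ X), F X (vec Z M) = vec Z' M) :
    ∀ {X Y : C} (M : X ⟶ Y) (u : Z.obj X),
      F Y (Z.map M u) = Z'.map M (F X u) := by
  intro X Y M u
  obtain ⟨⟨N⟩, ⟨P⟩⟩ := H1 X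
  obtain ⟨c, hc, hNP, -⟩ := H2 (N ≫ P)
  exact map_apply_eq_of_vec_ne_zero F hF (H3 X).1
    (vec_ne_zero_of_map_unitVec_eq_smul Z hc hNP) M u
end

section
/- Under hypotheses (H1)–(H3), every monoidal natural transformation θ : Z ⟶ Z' is a natural isomorphism, i.e., each component θ_X : Z(X) → Z'(X) is a linear isomorphism. -/
open CategoryTheory MonoidalCategory

universe v u

lemma unitVec_ne_zero_s7 {k : Type*} [Field k] {C : Type u} [Category.{v} C]
    [MonoidalCategory C] (Z : C ⥤ ModuleCat k) [Z.Monoidal] : unitVec Z ≠ 0 := by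
  intro h
  have h2 : (Functor.LaxMonoidal.ε Z ≫ Functor.OplaxMonoidal.η Z) (1 : k)
      = Functor.OplaxMonoidal.η Z (unitVec Z) := rfl
  rw [Functor.Monoidal.ε_η] at h2
  rw [h, map_zero] at h2
  simp at h2

/-- Under (H1)–(H3), every monoidal natural transformation `θ : Z ⟶ Z'` is a natural
isomorphism: each component `θ_X : Z(X) → Z'(X)` is a linear isomorphism (bijective). -/
theorem monoidal_nat_trans_bijective {k : Type*} [Field k] {C : Type u} [Category.{v} C]
    [MonoidalCategory C] (Z Z' : C ⥤ ModuleCat k) [Z.Monoidal] [Z'.Monoidal]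
    -- (H1): every object admits a morphism from and a morphism to the unit object
    (H1 : ∀ X : C, Nonempty (𝟙_ C ⟶ X) ∧ Nonempty (X ⟶ 𝟙_ C))
    -- (H2): for every `f : 𝟙 ⟶ 𝟙` the scalars `⟨Z(f)⟩` and `⟨Z'(f)⟩` agree and are nonzero
    (H2 : ∀ f : 𝟙_ C ⟶ 𝟙_ C, ∃ c : k, c ≠ 0 ∧
      Z.map f (unitVec Z) = c • unitVec Z ∧ Z'.map f (unitVec Z') = c • unitVec Z')
    -- (H3): all state spaces are one-dimensional
    (H3 : ∀ X : C, Module.finrank k (Z.obj X) = 1 ∧ Module.finrank k (Z'.obj X) = 1) :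
    ∀ θ : Z ⟶ Z', NatTrans.IsMonoidal θ →
      ∀ X : C, Function.Bijective (θ.app X) := by
  intro θ hθ X
  obtain ⟨⟨M⟩, ⟨N⟩⟩ := H1 X
  obtain ⟨c, hc, hZ, hZ'⟩ := H2 (M ≫ N)
  -- distinguished vectors
  set v : Z.obj X := Z.map M (unitVec Z) with hv
  set v' : Z'.obj X := Z'.map M (unitVec Z') with hv'
  -- θ sends the unit vector to the unit vector
  have hunit : θ.app (𝟙_ C) (unitVec Z) = unitVec Z' := by
    have := hθ.unit
    have h2 : (Functor.LaxMonoidal.ε Z ≫ θ.app (𝟙_ C)) (1 : k)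
        = Functor.LaxMonoidal.ε Z' (1 : k) := by rw [this]
    exact h2
  -- θ_X v = v'
  have hθv : θ.app X v = v' := by
    have h2 : (Z.map M ≫ θ.app X) (unitVec Z) = (θ.app (𝟙_ C) ≫ Z'.map M) (unitVec Z) := by
      rw [θ.naturality M]
    have h3 : θ.app X (Z.map M (unitVec Z)) = Z'.map M (θ.app (𝟙_ C) (unitVec Z)) := h2
    rw [hunit] at h3
    exact h3
  -- v ≠ 0
  have hvne : v ≠ 0 := by
    intro h
    rw [Z.map_comp] at hZ
    have h2 : Z.map N v = c • unitVec Z := hZ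
    rw [h, map_zero] at h2
    exact unitVec_ne_zero_s7 Z (by
      have := smul_eq_zero.mp h2.symm
      tauto)
  have hv'ne : v' ≠ 0 := by
    intro h
    rw [Z'.map_comp] at hZ'
    have h2 : Z'.map N v' = c • unitVec Z' := hZ'
    rw [h, map_zero] at h2
    exact unitVec_ne_zero_s7 Z' (by
      have := smul_eq_zero.mp h2.symm
      tauto)
  -- every element is a multiple of v, resp. v'
  obtain ⟨h3, h3'⟩ := H3 X
  have hspan : ∀ w : Z.obj X, ∃ a : k, w = a • v := by
    have := (finrank_eq_one_iff_of_nonzero v hvne).mp h3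
    intro w
    have hw : w ∈ Submodule.span k {v} := this ▸ Submodule.mem_top
    obtain ⟨a, ha⟩ := Submodule.mem_span_singleton.mp hw
    exact ⟨a, ha.symm⟩
  have hspan' : ∀ w : Z'.obj X, ∃ a : k, w = a • v' := by
    have := (finrank_eq_one_iff_of_nonzero v' hv'ne).mp h3'
    intro w
    have hw : w ∈ Submodule.span k {v'} := this ▸ Submodule.mem_top
    obtain ⟨a, ha⟩ := Submodule.mem_span_singleton.mp hw
    exact ⟨a, ha.symm⟩
  constructor
  · intro w₁ w₂ h
    obtain ⟨a₁, rfl⟩ := hspan w₁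
    obtain ⟨a₂, rfl⟩ := hspan w₂
    rw [map_smul, map_smul, hθv] at h
    have hz : (a₁ - a₂) • v' = 0 := by rw [sub_smul, h, sub_self]
    have h' := (smul_eq_zero.mp hz).resolve_right hv'ne
    rw [sub_eq_zero.mp h']
  · intro w
    obtain ⟨a, rfl⟩ := hspan' w
    exact ⟨a • v, by rw [map_smul, hθv]⟩
end
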